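/- Let 1/2 ≤ σ ≤ 1 and let f : {0,1}^n → ℝ₊ be a monotone, sub-additive, 1-Lipschitz function with f(0,…,0) = 0 and f(1,…,1) = r. Then Pr_{x~π_σ^n}[f(x) ≤ r/6] ≤ √2 · 2^{−r/12}. -/

import Mathlib

/-- The weight of a point `x ∈ {0,1}^n` under the product distribution `π_σ^n`. -/
noncomputable def cubeWeight (n : ℕ) (σ : ℝ) (x : Fin n → Bool) : ℝ :=
  ∏ i, if x i then σ else 1 - σ

open Classical in
/-- The probability of the event `E` under the product distribution `π_σ^n` on `{0,1}^n`,
where each coordinate is independently `1` with probability `σ`. -/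
noncomputable def cubePr (n : ℕ) (σ : ℝ) (E : (Fin n → Bool) → Prop) : ℝ :=
  ∑ x : Fin n → Bool, if E x then cubeWeight n σ x else 0

/-- `f` is monotone w.r.t. the partial order on `{0,1}^n` given by inclusion of supports. -/
def CubeMonotone {n : ℕ} (f : (Fin n → Bool) → ℝ) : Prop :=
  ∀ x y : Fin n → Bool, (∀ i, x i = true → y i = true) → f x ≤ f y

/-- `f` is sub-additive: `f(x+y) ≤ f(x) + f(y)` whenever `x, y` have disjoint supports. -/
def CubeSubadditive {n : ℕ} (f : (Fin n → Bool) → ℝ) : Prop :=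
  ∀ x y : Fin n → Bool, (∀ i, ¬(x i = true ∧ y i = true)) →
    f (fun i => x i || y i) ≤ f x + f y

/-- `f` is 1-Lipschitz w.r.t. the Hamming distance on `{0,1}^n`. -/
def CubeLipschitz {n : ℕ} (f : (Fin n → Bool) → ℝ) : Prop :=
  ∀ x y : Fin n → Bool,
    |f x - f y| ≤ ((Finset.univ.filter fun i : Fin n => x i ≠ y i).card : ℝ)

/-!
For `C, D ⊆ {0,1}ⁿ` let `d(C, D, x)` be the least number of coordinates at which `x`, `y` and `z`
all vanish, over `y ∈ C`, `z ∈ D`. An induction on `n` in the style of Talagrand shows that for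
`σ ≥ 1/2` and nonempty `C`, `D`
  `π_σ(C) · π_σ(D) · E_{π_σ}[2 ^ d(C, D, x)] ≤ 1`,
the induction step being an inequality between real numbers. For `C = {f ≤ r/6}`, sub-additivity and
the Lipschitz bound give `r ≤ f x + f y + f z + #(common zeros of x, y, z)`, so `d(C, C, x) ≥ r/2`
on `C`, and Markov's inequality yields `π_σ(C)³ · 2 ^ (r/2) ≤ 1`.
-/

theorem one_sub_add_mul_pow_three_le {p β : ℝ} (hp : 1 / 2 ≤ p) (hp1 : p ≤ 1) (hβ : 1 / 2 ≤ β)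
    (hβ1 : β ≤ 1) : (1 - p + p * β) ^ 3 ≤ β := by
  have h0 : 0 ≤ 1 - p + p * β := by nlinarith
  calc (1 - p + p * β) ^ 3 ≤ ((1 + β) / 2) ^ 3 := by gcongr; nlinarith
    _ ≤ β := by nlinarith [mul_nonneg (sub_nonneg.2 hβ1) (by nlinarith : (0:ℝ) ≤ β ^ 2 + 4 * β - 1)]

theorem talagrand_step_ineq_normalized {p α β t : ℝ} (hp : 1 / 2 ≤ p) (hp1 : p ≤ 1) (hα : 0 ≤ α)
    (hαβ : α ≤ β) (hβ : β ≤ 1) (ht : 0 ≤ t) (ht2 : t ≤ 2) (hβt : β * t ≤ 1) :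
    (1 - p + p * α) * (1 - p + p * β) * (p + (1 - p) * t) ≤ 1 := by
  have hq : 0 ≤ 1 - p := by linarith
  have hX : 1 - p + p * α ≤ 1 - p + p * β := by nlinarith
  rcases le_or_gt (1 / 2) β with hβ2 | hβ2
  · have hβ0 : 0 < β := by linarith
    have hZ : β * (p + (1 - p) * t) ≤ 1 - p + p * β := by nlinarith
    have hcube := one_sub_add_mul_pow_three_le hp hp1 hβ2 hβ
    refine le_of_mul_le_mul_left ?_ hβ0
    calc β * ((1 - p + p * α) * (1 - p + p * β) * (p + (1 - p) * t))
        = (1 - p + p * α) * (1 - p + p * β) * (β * (p + (1 - p) * t)) := by ring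
      _ ≤ (1 - p + p * β) * (1 - p + p * β) * (1 - p + p * β) := by gcongr
      _ ≤ β * 1 := by nlinarith
  · calc (1 - p + p * α) * (1 - p + p * β) * (p + (1 - p) * t)
        ≤ (1 - p / 2) * (1 - p / 2) * (2 - p) := by gcongr <;> nlinarith
      _ ≤ 1 := by nlinarith [mul_nonneg (mul_nonneg (sub_nonneg.2 hp) (sub_nonneg.2 hp)) hq]

/- In the induction step, `a₀, a₁` are the measures of the slices `{x₀ = 0}`, `{x₀ = 1}` of `C` and
`A` is that of its projection (likewise `d₀, d₁, B` for `D`), while `E₀, E₁` are the means of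
`2 ^ d(C, D, x)` over `x₀ = 0`, `x₀ = 1`; the normalized form has `α, β, t = a₁/A, d₁/B, A·B·E₀`. -/
theorem talagrand_step_ineq {p a₀ a₁ A d₀ d₁ B E₀ E₁ : ℝ} (hp : 1 / 2 ≤ p) (hp1 : p ≤ 1)
    (ha₀ : 0 ≤ a₀) (ha₀A : a₀ ≤ A) (ha₁ : 0 ≤ a₁) (ha₁A : a₁ ≤ A)
    (hd₀ : 0 ≤ d₀) (hd₀B : d₀ ≤ B) (hd₁ : 0 ≤ d₁) (hd₁B : d₁ ≤ B)
    (hE₀ : 0 ≤ E₀) (hE₁ : 0 ≤ E₁) (hE₁AB : A * B * E₁ ≤ 1) (hE₀AB : A * B * E₀ ≤ 2)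
    (hE₀a : a₁ * B * E₀ ≤ 1) (hE₀d : A * d₁ * E₀ ≤ 1) :
    ((1 - p) * a₀ + p * a₁) * ((1 - p) * d₀ + p * d₁) * ((1 - p) * E₀ + p * E₁) ≤ 1 := by
  wlog hαβ : a₁ * B ≤ A * d₁ generalizing a₀ a₁ A d₀ d₁ B
  · calc _ = ((1 - p) * d₀ + p * d₁) * ((1 - p) * a₀ + p * a₁) * ((1 - p) * E₀ + p * E₁) := by
          ring
      _ ≤ 1 := this hd₀ hd₀B hd₁ hd₁B ha₀ ha₀A ha₁ ha₁A (by linarith) (by linarith)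
          (by linarith) (by linarith) (by linarith)
  rcases (ha₁.trans ha₁A).eq_or_lt with hA | hA
  · have : (1 - p) * a₀ + p * a₁ = 0 := by
      rw [show a₀ = 0 by linarith, show a₁ = 0 by linarith]; ring
    simp [this]
  rcases (hd₁.trans hd₁B).eq_or_lt with hB | hB
  · have : (1 - p) * d₀ + p * d₁ = 0 := by
      rw [show d₀ = 0 by linarith, show d₁ = 0 by linarith]; ring
    simp [this]
  have hβt : d₁ / B * (A * B * E₀) = A * d₁ * E₀ := by field_simp
  calc _ ≤ ((1 - p) * A + p * a₁) * ((1 - p) * B + p * d₁) * ((1 - p) * E₀ + p * E₁) := by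
        gcongr
    _ = (1 - p + p * (a₁ / A)) * (1 - p + p * (d₁ / B)) *
          (p * (A * B * E₁) + (1 - p) * (A * B * E₀)) := by
        field_simp; ring
    _ ≤ (1 - p + p * (a₁ / A)) * (1 - p + p * (d₁ / B)) * (p + (1 - p) * (A * B * E₀)) := by
        gcongr
        exact mul_le_of_le_one_right (by linarith) hE₁AB
    _ ≤ 1 := talagrand_step_ineq_normalized hp hp1 (by positivity)
        (by rw [div_le_div_iff₀ hA hB]; linarith) (div_le_one_of_le₀ hd₁B hB.le) (by positivity)
        hE₀AB (hβt ▸ hE₀d)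

theorem le_sqrt_two_mul_two_rpow_of_pow_three_mul_le {m r : ℝ} (hm : 0 ≤ m) (hr : 0 ≤ r)
    (h : m ^ 3 * 2 ^ (r / 2) ≤ 1) : m ≤ √2 * 2 ^ (-(r / 12)) := by
  have hcube : m ^ 3 ≤ (2 ^ (-(r / 6)) : ℝ) ^ 3 := by
    rw [← Real.rpow_natCast (2 ^ _), ← Real.rpow_mul zero_le_two]
    calc m ^ 3 = m ^ 3 * 2 ^ (r / 2) * 2 ^ (-(r / 6) * ((3 : ℕ) : ℝ)) := by
          rw [mul_assoc, ← Real.rpow_add zero_lt_two]; ring_nf; simp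
      _ ≤ 2 ^ (-(r / 6) * ((3 : ℕ) : ℝ)) := mul_le_of_le_one_left (by positivity) h
  calc m ≤ 2 ^ (-(r / 6)) := (pow_le_pow_iff_left₀ hm (by positivity) three_ne_zero).1 hcube
    _ ≤ 2 ^ (-(r / 12)) := Real.rpow_le_rpow_of_exponent_le one_le_two (by linarith)
    _ ≤ √2 * 2 ^ (-(r / 12)) :=
      le_mul_of_one_le_left (by positivity) (Real.one_le_sqrt.2 one_le_two)

namespace BoolCube

variable {n : ℕ} {σ : ℝ}

noncomputable def cubeMean (n : ℕ) (σ : ℝ) (g : (Fin n → Bool) → ℝ) : ℝ :=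
  ∑ x, cubeWeight n σ x * g x

theorem cubeWeight_nonneg (h0 : 0 ≤ σ) (h1 : σ ≤ 1) (x : Fin n → Bool) : 0 ≤ cubeWeight n σ x :=
  Finset.prod_nonneg fun i _ => by split <;> linarith

theorem cubeWeight_cons (σ : ℝ) (b : Bool) (x : Fin n → Bool) :
    cubeWeight (n + 1) σ (Fin.cons b x) = (if b then σ else 1 - σ) * cubeWeight n σ x := by
  simp [cubeWeight, Fin.prod_univ_succ]

theorem cubeMean_succ (σ : ℝ) (g : (Fin (n + 1) → Bool) → ℝ) :
    cubeMean (n + 1) σ g = (1 - σ) * cubeMean n σ (fun x => g (Fin.cons false x)) +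
      σ * cubeMean n σ (fun x => g (Fin.cons true x)) := by
  rw [cubeMean, ← (Fin.consEquiv fun _ => Bool).sum_comp, Fintype.sum_prod_type, Fintype.sum_bool]
  simp only [Fin.consEquiv, Equiv.coe_fn_mk, cubeWeight_cons, cubeMean, Finset.mul_sum]
  simp [mul_assoc, add_comm]

theorem cubeMean_mono (h0 : 0 ≤ σ) (h1 : σ ≤ 1) {g h : (Fin n → Bool) → ℝ} (hgh : ∀ x, g x ≤ h x) :
    cubeMean n σ g ≤ cubeMean n σ h :=
  Finset.sum_le_sum fun x _ => mul_le_mul_of_nonneg_left (hgh x) (cubeWeight_nonneg h0 h1 x)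

theorem cubeMean_nonneg (h0 : 0 ≤ σ) (h1 : σ ≤ 1) {g : (Fin n → Bool) → ℝ} (hg : ∀ x, 0 ≤ g x) :
    0 ≤ cubeMean n σ g :=
  Finset.sum_nonneg fun x _ => mul_nonneg (cubeWeight_nonneg h0 h1 x) (hg x)

theorem cubeMean_const_mul (σ c : ℝ) (g : (Fin n → Bool) → ℝ) :
    cubeMean n σ (fun x => c * g x) = c * cubeMean n σ g := by
  simp only [cubeMean, Finset.mul_sum]
  exact Finset.sum_congr rfl fun x _ => by ring

theorem cubeMean_const (n : ℕ) (σ c : ℝ) : cubeMean n σ (fun _ => c) = c := by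
  induction n with
  | zero => simp [cubeMean, cubeWeight]
  | succ n ih => rw [cubeMean_succ, ih]; ring

open Classical in
theorem cubePr_eq_cubeMean (E : (Fin n → Bool) → Prop) :
    cubePr n σ E = cubeMean n σ (fun x => if E x then 1 else 0) :=
  Finset.sum_congr rfl fun x _ => by by_cases hE : E x <;> simp [hE]

theorem cubePr_succ (σ : ℝ) (E : (Fin (n + 1) → Bool) → Prop) :
    cubePr (n + 1) σ E = (1 - σ) * cubePr n σ (fun x => E (Fin.cons false x)) +
      σ * cubePr n σ (fun x => E (Fin.cons true x)) := by
  simp only [cubePr_eq_cubeMean, cubeMean_succ]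

theorem cubePr_mono (h0 : 0 ≤ σ) (h1 : σ ≤ 1) {E F : (Fin n → Bool) → Prop} (hEF : ∀ x, E x → F x) :
    cubePr n σ E ≤ cubePr n σ F := by
  classical
  simp only [cubePr_eq_cubeMean]
  refine cubeMean_mono h0 h1 fun x => ?_
  split_ifs <;> simp_all

theorem cubePr_nonneg (h0 : 0 ≤ σ) (h1 : σ ≤ 1) (E : (Fin n → Bool) → Prop) : 0 ≤ cubePr n σ E :=
  Finset.sum_nonneg fun x _ => by split; exacts [cubeWeight_nonneg h0 h1 x, le_rfl]

theorem cubePr_le_one (h0 : 0 ≤ σ) (h1 : σ ≤ 1) (E : (Fin n → Bool) → Prop) : cubePr n σ E ≤ 1 := by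
  classical
  rw [cubePr_eq_cubeMean]
  exact (cubeMean_mono h0 h1 fun x => by split <;> norm_num).trans_eq (cubeMean_const n σ 1)

theorem cubePr_eq_zero {E : (Fin n → Bool) → Prop} (hE : ∀ x, ¬E x) : cubePr n σ E = 0 :=
  Finset.sum_eq_zero fun x _ => if_neg (hE x)

theorem cubePr_mul_le_cubeMean (h0 : 0 ≤ σ) (h1 : σ ≤ 1) {E : (Fin n → Bool) → Prop}
    {g : (Fin n → Bool) → ℝ} {c : ℝ} (hg : ∀ x, 0 ≤ g x) (hEg : ∀ x, E x → c ≤ g x) :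
    cubePr n σ E * c ≤ cubeMean n σ g := by
  classical
  rw [cubePr_eq_cubeMean, mul_comm, ← cubeMean_const_mul]
  refine cubeMean_mono h0 h1 fun x => ?_
  split_ifs with hE <;> simp [hEg, hg, hE]

def commonZeros (x y z : Fin n → Bool) : ℕ :=
  (Finset.univ.filter fun i => x i = false ∧ y i = false ∧ z i = false).card

theorem commonZeros_comm (x y z : Fin n → Bool) : commonZeros x y z = commonZeros x z y := by
  simp only [commonZeros, and_comm (a := y _ = false)]

theorem commonZeros_cons (a b c : Bool) (x y z : Fin n → Bool) :
    commonZeros (Fin.cons a x) (Fin.cons b y) (Fin.cons c z) =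
      (if a = false ∧ b = false ∧ c = false then 1 else 0) + commonZeros x y z := by
  rw [commonZeros, commonZeros, Finset.card_filter, Finset.card_filter, Fin.sum_univ_succ]
  simp

theorem commonZeros_fin_zero (x y z : Fin 0 → Bool) : commonZeros x y z = 0 := by
  simp [commonZeros]

/- `sInf ∅ = 0`: the value is meaningful only for nonempty `C` and `D`. -/
noncomputable def minCommonZeros (C D : Set (Fin n → Bool)) (x : Fin n → Bool) : ℕ :=
  sInf (Set.image2 (commonZeros x) C D)

section MinCommonZeros

variable {C D : Set (Fin n → Bool)}

theorem minCommonZeros_le {x y z : Fin n → Bool} (hy : y ∈ C) (hz : z ∈ D) :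
    minCommonZeros C D x ≤ commonZeros x y z :=
  Nat.sInf_le (Set.mem_image2_of_mem hy hz)

theorem exists_commonZeros_eq_minCommonZeros (hC : C.Nonempty) (hD : D.Nonempty)
    (x : Fin n → Bool) : ∃ y ∈ C, ∃ z ∈ D, commonZeros x y z = minCommonZeros C D x :=
  Nat.sInf_mem (hC.image2 hD)

theorem minCommonZeros_comm (C D : Set (Fin n → Bool)) : minCommonZeros C D = minCommonZeros D C := by
  ext x
  rw [minCommonZeros, minCommonZeros, Set.image2_swap]
  simp only [commonZeros_comm x]

theorem minCommonZeros_le_add {m : ℕ} {C' D' : Set (Fin m → Bool)} {x : Fin n → Bool}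
    {x' : Fin m → Bool} {k : ℕ} (hC' : C'.Nonempty) (hD' : D'.Nonempty)
    (h : ∀ y ∈ C', ∀ z ∈ D', ∃ y₁ ∈ C, ∃ z₁ ∈ D, commonZeros x y₁ z₁ ≤ commonZeros x' y z + k) :
    minCommonZeros C D x ≤ minCommonZeros C' D' x' + k := by
  obtain ⟨y, hy, z, hz, hyz⟩ := exists_commonZeros_eq_minCommonZeros hC' hD' x'
  obtain ⟨y₁, hy₁, z₁, hz₁, h₁⟩ := h y hy z hz
  exact (minCommonZeros_le hy₁ hz₁).trans (hyz ▸ h₁)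

end MinCommonZeros

theorem exists_cons_mem_of_mem_image_tail {C : Set (Fin (n + 1) → Bool)} {y : Fin n → Bool}
    (hy : y ∈ Fin.tail '' C) : ∃ b, Fin.cons b y ∈ C := by
  obtain ⟨x, hx, rfl⟩ := hy
  exact ⟨x 0, by rwa [Fin.cons_self_tail]⟩

section Slices

variable {C D : Set (Fin (n + 1) → Bool)}

theorem minCommonZeros_cons_true_le (hC : C.Nonempty) (hD : D.Nonempty) (x : Fin n → Bool) :
    minCommonZeros C D (Fin.cons true x) ≤ minCommonZeros (Fin.tail '' C) (Fin.tail '' D) x := by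
  refine minCommonZeros_le_add (k := 0) (hC.image _) (hD.image _) fun y hy z hz => ?_
  obtain ⟨b, hb⟩ := exists_cons_mem_of_mem_image_tail hy
  obtain ⟨c, hc⟩ := exists_cons_mem_of_mem_image_tail hz
  exact ⟨_, hb, _, hc, by simp [commonZeros_cons]⟩

theorem minCommonZeros_cons_false_le (hC : C.Nonempty) (hD : D.Nonempty) (x : Fin n → Bool) :
    minCommonZeros C D (Fin.cons false x) ≤
      minCommonZeros (Fin.tail '' C) (Fin.tail '' D) x + 1 := by
  refine minCommonZeros_le_add (hC.image _) (hD.image _) fun y hy z hz => ?_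
  obtain ⟨b, hb⟩ := exists_cons_mem_of_mem_image_tail hy
  obtain ⟨c, hc⟩ := exists_cons_mem_of_mem_image_tail hz
  refine ⟨_, hb, _, hc, ?_⟩
  rw [commonZeros_cons, add_comm]
  split <;> omega

theorem minCommonZeros_cons_false_le_left (hC : {y | Fin.cons true y ∈ C}.Nonempty)
    (hD : D.Nonempty) (x : Fin n → Bool) :
    minCommonZeros C D (Fin.cons false x) ≤
      minCommonZeros {y | Fin.cons true y ∈ C} (Fin.tail '' D) x := by
  refine minCommonZeros_le_add (k := 0) hC (hD.image _) fun y hy z hz => ?_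
  obtain ⟨c, hc⟩ := exists_cons_mem_of_mem_image_tail hz
  exact ⟨_, hy, _, hc, by simp [commonZeros_cons]⟩

theorem minCommonZeros_cons_false_le_right (hC : C.Nonempty)
    (hD : {y | Fin.cons true y ∈ D}.Nonempty) (x : Fin n → Bool) :
    minCommonZeros C D (Fin.cons false x) ≤
      minCommonZeros (Fin.tail '' C) {y | Fin.cons true y ∈ D} x := by
  rw [minCommonZeros_comm, minCommonZeros_comm (Fin.tail '' C)]
  exact minCommonZeros_cons_false_le_left hD hC x

end Slices

theorem cubePr_mul_cubePr_mul_cubeMean_le_two_pow (h0 : 0 ≤ σ) (h1 : σ ≤ 1)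
    {C D : Set (Fin n → Bool)} {m : (Fin n → Bool) → ℕ} {k : ℕ}
    (hm : ∀ x, m x ≤ minCommonZeros C D x + k)
    (hCD : cubePr n σ (· ∈ C) * cubePr n σ (· ∈ D) *
      cubeMean n σ (fun x => 2 ^ minCommonZeros C D x) ≤ 1) :
    cubePr n σ (· ∈ C) * cubePr n σ (· ∈ D) * cubeMean n σ (fun x => 2 ^ m x) ≤ 2 ^ k := by
  have hCD0 := mul_nonneg (cubePr_nonneg h0 h1 (· ∈ C)) (cubePr_nonneg h0 h1 (· ∈ D))
  calc _ ≤ cubePr n σ (· ∈ C) * cubePr n σ (· ∈ D) *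
        cubeMean n σ (fun x => 2 ^ k * 2 ^ minCommonZeros C D x) := by
        gcongr
        refine cubeMean_mono h0 h1 fun x => ?_
        rw [← pow_add, add_comm k]
        exact pow_le_pow_right₀ one_le_two (hm x)
    _ = 2 ^ k * (cubePr n σ (· ∈ C) * cubePr n σ (· ∈ D) *
        cubeMean n σ (fun x => 2 ^ minCommonZeros C D x)) := by
        rw [cubeMean_const_mul]; ring
    _ ≤ 2 ^ k := mul_le_of_le_one_right (by positivity) hCD

theorem cubePr_mul_cubePr_mul_cubeMean_two_pow_le_one (hσ : 1 / 2 ≤ σ) (hσ1 : σ ≤ 1)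
    {C D : Set (Fin n → Bool)} (hC : C.Nonempty) (hD : D.Nonempty) :
    cubePr n σ (· ∈ C) * cubePr n σ (· ∈ D) *
      cubeMean n σ (fun x => 2 ^ minCommonZeros C D x) ≤ 1 := by
  have h0 : 0 ≤ σ := by linarith
  induction n with
  | zero =>
    obtain ⟨y, hy⟩ := hC
    obtain ⟨z, hz⟩ := hD
    have hmin (x) : minCommonZeros C D x = 0 :=
      Nat.eq_zero_of_le_zero ((minCommonZeros_le hy hz).trans_eq (commonZeros_fin_zero x y z))
    simp only [hmin, pow_zero, cubeMean_const, mul_one]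
    exact mul_le_one₀ (cubePr_le_one h0 hσ1 _) (cubePr_nonneg h0 hσ1 _) (cubePr_le_one h0 hσ1 _)
  | succ n ih =>
    have hC' := hC.image Fin.tail
    have hD' := hD.image Fin.tail
    have hE₁ := cubePr_mul_cubePr_mul_cubeMean_le_two_pow (k := 0) h0 hσ1
      (minCommonZeros_cons_true_le hC hD) (ih hC' hD')
    have hE₀ := cubePr_mul_cubePr_mul_cubeMean_le_two_pow h0 hσ1
      (minCommonZeros_cons_false_le hC hD) (ih hC' hD')
    have hE₀C : cubePr n σ (fun y => Fin.cons true y ∈ C) * cubePr n σ (· ∈ Fin.tail '' D) *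
        cubeMean n σ (fun x => 2 ^ minCommonZeros C D (Fin.cons false x)) ≤ 1 := by
      rcases Set.eq_empty_or_nonempty {y | Fin.cons true y ∈ C} with hC₁ | hC₁
      · rw [cubePr_eq_zero (E := fun y => Fin.cons true y ∈ C)
          (Set.eq_empty_iff_forall_notMem.1 hC₁), zero_mul, zero_mul]
        exact zero_le_one
      · simpa using cubePr_mul_cubePr_mul_cubeMean_le_two_pow (k := 0) h0 hσ1
          (minCommonZeros_cons_false_le_left hC₁ hD) (ih hC₁ hD')
    have hE₀D : cubePr n σ (· ∈ Fin.tail '' C) * cubePr n σ (fun y => Fin.cons true y ∈ D) *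
        cubeMean n σ (fun x => 2 ^ minCommonZeros C D (Fin.cons false x)) ≤ 1 := by
      rcases Set.eq_empty_or_nonempty {y | Fin.cons true y ∈ D} with hD₁ | hD₁
      · rw [cubePr_eq_zero (E := fun y => Fin.cons true y ∈ D)
          (Set.eq_empty_iff_forall_notMem.1 hD₁), mul_zero, zero_mul]
        exact zero_le_one
      · simpa using cubePr_mul_cubePr_mul_cubeMean_le_two_pow (k := 0) h0 hσ1
          (minCommonZeros_cons_false_le_right hC hD₁) (ih hC' hD₁)
    have hslice {E : Set (Fin (n + 1) → Bool)} (b : Bool) :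
        cubePr n σ (fun y => Fin.cons b y ∈ E) ≤ cubePr n σ (· ∈ Fin.tail '' E) :=
      cubePr_mono h0 hσ1 fun y hy => ⟨_, hy, Fin.tail_cons _ _⟩
    rw [cubePr_succ, cubePr_succ, cubeMean_succ]
    refine talagrand_step_ineq hσ hσ1 (cubePr_nonneg h0 hσ1 _) (hslice false)
      (cubePr_nonneg h0 hσ1 _) (hslice true) (cubePr_nonneg h0 hσ1 _) (hslice false)
      (cubePr_nonneg h0 hσ1 _) (hslice true) ?_ ?_ (by simpa using hE₁) (by simpa using hE₀)
      hE₀C hE₀D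
    all_goals exact cubeMean_nonneg h0 hσ1 fun x => by positivity

end BoolCube

theorem CubeSubadditive.apply_or_le {n : ℕ} {f : (Fin n → Bool) → ℝ} (hsub : CubeSubadditive f)
    (hmono : CubeMonotone f) (x y : Fin n → Bool) : f (fun i => x i || y i) ≤ f x + f y := by
  have hdisj := hsub x (fun i => y i && !x i) fun i => by cases x i <;> simp
  have hsplit : (fun i => x i || (y i && !x i)) = fun i => x i || y i := by
    funext i; cases x i <;> simp
  rw [hsplit] at hdisj
  linarith [hmono (fun i => y i && !x i) y fun i => by simp_all]

theorem CubeLipschitz.apply_le_card {n : ℕ} {f : (Fin n → Bool) → ℝ} (hlip : CubeLipschitz f)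
    (h0 : f (fun _ => false) = 0) (x : Fin n → Bool) :
    f x ≤ (Finset.univ.filter fun i => x i = true).card := by
  simpa [h0] using (le_abs_self _).trans (hlip x fun _ => false)

open BoolCube in
theorem le_add_add_add_commonZeros {n : ℕ} {f : (Fin n → Bool) → ℝ} (hmono : CubeMonotone f)
    (hsub : CubeSubadditive f) (hlip : CubeLipschitz f) (h0 : f (fun _ => false) = 0)
    (x y z : Fin n → Bool) : f (fun _ => true) ≤ f x + f y + f z + commonZeros x y z := by
  set w : Fin n → Bool := fun i => !(x i || y i || z i)
  have hw : f w ≤ commonZeros x y z := by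
    refine (hlip.apply_le_card h0 w).trans_eq ?_
    simp [w, commonZeros, and_assoc]
  calc f (fun _ => true) ≤ f (fun i => (x i || y i || z i) || w i) :=
        hmono _ _ fun i _ => Bool.or_not_self _
    _ ≤ f (fun i => x i || y i || z i) + f w := hsub.apply_or_le hmono _ w
    _ ≤ f x + f y + f z + commonZeros x y z := by
        linarith [hsub.apply_or_le hmono (fun i => x i || y i) z, hsub.apply_or_le hmono x y]

open BoolCube in
theorem concentration_large_sigma_general (n : ℕ) (σ r : ℝ) (hσ0 : 1 / 2 ≤ σ) (hσ1 : σ ≤ 1)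
    (f : (Fin n → Bool) → ℝ)
    (hmono : CubeMonotone f) (hsub : CubeSubadditive f) (hlip : CubeLipschitz f)
    (h0 : f (fun _ => false) = 0) (h1 : f (fun _ => true) = r) :
    cubePr n σ (fun x => f x ≤ r / 6) ≤ Real.sqrt 2 * (2 : ℝ) ^ (-(r / 12)) := by
  have hσ : 0 ≤ σ := by linarith
  have hr : 0 ≤ r := h1 ▸ h0 ▸ hmono _ _ fun _ h => absurd h Bool.false_ne_true
  set C := {x | f x ≤ r / 6}
  have hC : C.Nonempty := ⟨fun _ => false, show f _ ≤ r / 6 by linarith⟩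
  have hfar (x) (hx : f x ≤ r / 6) : r / 2 ≤ minCommonZeros C C x := by
    obtain ⟨y, hy, z, hz, hyz⟩ := exists_commonZeros_eq_minCommonZeros hC hC x
    have hyz' : f y ≤ r / 6 ∧ f z ≤ r / 6 := ⟨hy, hz⟩
    have hcover := le_add_add_add_commonZeros hmono hsub hlip h0 x y z
    rw [← hyz]
    linarith
  have hmarkov : cubePr n σ (· ∈ C) * 2 ^ (r / 2) ≤
      cubeMean n σ (fun x => 2 ^ minCommonZeros C C x) :=
    cubePr_mul_le_cubeMean hσ hσ1 (fun x => by positivity) fun x hx => by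
      rw [← Real.rpow_natCast]
      exact Real.rpow_le_rpow_of_exponent_le one_le_two (hfar x hx)
  have hT := cubePr_mul_cubePr_mul_cubeMean_two_pow_le_one hσ0 hσ1 hC hC
  have hμ := cubePr_nonneg hσ hσ1 (· ∈ C)
  refine le_sqrt_two_mul_two_rpow_of_pow_three_mul_le hμ hr ?_
  calc cubePr n σ (· ∈ C) ^ 3 * 2 ^ (r / 2)
      = cubePr n σ (· ∈ C) * cubePr n σ (· ∈ C) * (cubePr n σ (· ∈ C) * 2 ^ (r / 2)) := by ring
    _ ≤ cubePr n σ (· ∈ C) * cubePr n σ (· ∈ C) *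
        cubeMean n σ (fun x => 2 ^ minCommonZeros C C x) := by gcongr
    _ ≤ 1 := hT

/-- **Concentration inequality, case `1/2 ≤ σ ≤ 1`** (Lemma 2.4): if
`f : {0,1}^n → ℝ₊` is monotone, sub-additive and 1-Lipschitz with `f(0) = 0` and
`f(1) = r`, then `Pr_{x∼π_σ^n}[f(x) ≤ r/6] ≤ √2·2^{-r/12}`. -/
theorem concentration_large_sigma (n : ℕ) (σ r : ℝ) (hσ0 : 1 / 2 ≤ σ) (hσ1 : σ ≤ 1)
    (f : (Fin n → Bool) → ℝ)
    (hnn : ∀ x, 0 ≤ f x)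
    (hmono : CubeMonotone f) (hsub : CubeSubadditive f) (hlip : CubeLipschitz f)
    (h0 : f (fun _ => false) = 0) (h1 : f (fun _ => true) = r) :
    cubePr n σ (fun x => f x ≤ r / 6) ≤ Real.sqrt 2 * (2 : ℝ) ^ (-(r / 12)) :=
  concentration_large_sigma_general n σ r hσ0 hσ1 f hmono hsub hlip h0 h1
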